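/- Let T : D(T) ⊆ H₁ → H₂ be a densely defined closed operator, E = [[0,T*],[T,0]], and λ ≠ 0. Then λ is an eigenvalue of E if and only if λ² is an eigenvalue of TT*, if and only if λ² is an eigenvalue of T*T. -/

import Mathlib

open LinearPMap

variable {H₁ H₂ : Type*}
  [NormedAddCommGroup H₁] [InnerProductSpace ℂ H₁] [CompleteSpace H₁]
  [NormedAddCommGroup H₂] [InnerProductSpace ℂ H₂] [CompleteSpace H₂]

/-- The block operator matrix `E = [[0, T*], [T, 0]]` acting on the Hilbert space direct sum
`H₁ ⊕ H₂` (realised as `WithLp 2 (H₁ × H₂)`), with domain `D(T) ⊕ D(T*)`, acting by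
`E (u, v) = (T* v, T u)`. -/
noncomputable def blockOp (T : H₁ →ₗ.[ℂ] H₂) :
    (WithLp 2 (H₁ × H₂)) →ₗ.[ℂ] (WithLp 2 (H₁ × H₂)) where
  domain := (T.domain.prod T.adjoint.domain).comap
      (WithLp.linearEquiv 2 ℂ (H₁ × H₂)).toLinearMap
  toFun :=
    (WithLp.linearEquiv 2 ℂ (H₁ × H₂)).symm.toLinearMap.comp <|
      LinearMap.prod
        (T.adjoint.toFun.comp <|
          LinearMap.codRestrict T.adjoint.domain
            ((LinearMap.snd ℂ H₁ H₂).comp <|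
              (WithLp.linearEquiv 2 ℂ (H₁ × H₂)).toLinearMap.comp
                ((T.domain.prod T.adjoint.domain).comap
                  (WithLp.linearEquiv 2 ℂ (H₁ × H₂)).toLinearMap).subtype)
            (fun c => c.2.2))
        (T.toFun.comp <|
          LinearMap.codRestrict T.domain
            ((LinearMap.fst ℂ H₁ H₂).comp <|
              (WithLp.linearEquiv 2 ℂ (H₁ × H₂)).toLinearMap.comp
                ((T.domain.prod T.adjoint.domain).comap
                  (WithLp.linearEquiv 2 ℂ (H₁ × H₂)).toLinearMap).subtype)
            (fun c => c.2.1))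

/-- `μ` is an eigenvalue of the partially defined operator `A`. -/
def LinearPMap.HasEigenvalue {E : Type*} [NormedAddCommGroup E] [InnerProductSpace ℂ E]
    (A : E →ₗ.[ℂ] E) (μ : ℂ) : Prop :=
  ∃ x : A.domain, (x : E) ≠ 0 ∧ A x = μ • (x : E)

/-- `μ` is an eigenvalue of `T T*` (the product being taken on its natural domain
`{v ∈ D(T*) : T* v ∈ D(T)}`). -/
def hasEigenvalueTTstar (T : H₁ →ₗ.[ℂ] H₂) (μ : ℂ) : Prop :=
  ∃ v : T.adjoint.domain, (v : H₂) ≠ 0 ∧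
    ∃ h : T.adjoint v ∈ T.domain, T ⟨T.adjoint v, h⟩ = μ • (v : H₂)

/-- `μ` is an eigenvalue of `T* T` (the product being taken on its natural domain
`{u ∈ D(T) : T u ∈ D(T*)}`). -/
def hasEigenvalueTstarT (T : H₁ →ₗ.[ℂ] H₂) (μ : ℂ) : Prop :=
  ∃ u : T.domain, (u : H₁) ≠ 0 ∧
    ∃ h : T u ∈ T.adjoint.domain, T.adjoint ⟨T u, h⟩ = μ • (u : H₁)

namespace LinearPMap

variable {K E F : Type*} [Field K] [AddCommGroup E] [Module K E] [AddCommGroup F] [Module K F]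

/-- `μ` is an eigenvalue of `f ∘ g` on its natural domain `{v ∈ D(g) : g v ∈ D(f)}`. -/
def HasCompEigenvalue (f : E →ₗ.[K] F) (g : F →ₗ.[K] E) (μ : K) : Prop :=
  ∃ v : g.domain, (v : F) ≠ 0 ∧ ∃ h : g v ∈ f.domain, f ⟨g v, h⟩ = μ • (v : F)

theorem HasCompEigenvalue.symm {f : E →ₗ.[K] F} {g : F →ₗ.[K] E} {μ : K} (hμ : μ ≠ 0)
    (h : f.HasCompEigenvalue g μ) : g.HasCompEigenvalue f μ := by
  obtain ⟨v, hv, hgv, hfgv⟩ := h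
  set u : f.domain := ⟨g v, hgv⟩
  have hfu_mem : f u ∈ g.domain := hfgv ▸ g.domain.smul_mem μ v.2
  refine ⟨u, fun hu => hv ?_, hfu_mem, ?_⟩
  · rw [show u = 0 from Subtype.ext hu, f.map_zero] at hfgv
    exact (smul_eq_zero.mp hfgv.symm).resolve_left hμ
  · rw [show (⟨f u, hfu_mem⟩ : g.domain) = μ • v from Subtype.ext hfgv, g.map_smul]

theorem hasCompEigenvalue_comm {f : E →ₗ.[K] F} {g : F →ₗ.[K] E} {μ : K} (hμ : μ ≠ 0) :
    f.HasCompEigenvalue g μ ↔ g.HasCompEigenvalue f μ :=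
  ⟨.symm hμ, .symm hμ⟩

/-- The right side says that `μ` is an eigenvalue of the anti-diagonal operator
`(u, v) ↦ (g v, f u)`; an eigenvector `v` of `f ∘ g` lifts to `(μ⁻¹ • g v, v)`. -/
theorem hasCompEigenvalue_sq_iff {f : E →ₗ.[K] F} {g : F →ₗ.[K] E} {μ : K} (hμ : μ ≠ 0) :
    f.HasCompEigenvalue g (μ ^ 2) ↔ ∃ (u : f.domain) (v : g.domain),
      ((u : E), (v : F)) ≠ 0 ∧ g v = μ • (u : E) ∧ f u = μ • (v : F) := by
  constructor
  · rintro ⟨v, hv, hgv, hfgv⟩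
    refine ⟨μ⁻¹ • ⟨g v, hgv⟩, v, fun h => hv congr($h.2), ?_, ?_⟩
    · exact (smul_inv_smul₀ hμ _).symm
    · rw [f.map_smul, hfgv, smul_smul, sq, ← mul_assoc, inv_mul_cancel₀ hμ, one_mul]
  · rintro ⟨u, v, huv, hgv, hfu⟩
    have hv : (v : F) ≠ 0 := by
      intro hv
      rw [show v = 0 from Subtype.ext hv, g.map_zero] at hgv
      exact huv (Prod.ext ((smul_eq_zero.mp hgv.symm).resolve_left hμ) hv)
    have hgv_mem : g v ∈ f.domain := hgv ▸ f.domain.smul_mem μ u.2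
    refine ⟨v, hv, hgv_mem, ?_⟩
    rw [show (⟨g v, hgv_mem⟩ : f.domain) = μ • u from Subtype.ext hgv, f.map_smul, hfu,
      smul_smul, sq]

end LinearPMap

set_option linter.unusedSectionVars false in
theorem blockOp_hasEigenvalue_iff (T : H₁ →ₗ.[ℂ] H₂) (lam : ℂ) :
    (blockOp T).HasEigenvalue lam ↔ ∃ (u : T.domain) (v : T.adjoint.domain),
      ((u : H₁), (v : H₂)) ≠ 0 ∧ T.adjoint v = lam • (u : H₁) ∧ T u = lam • (v : H₂) := by
  constructor
  · rintro ⟨⟨⟨x⟩, hx⟩, hx0, hEx⟩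
    exact ⟨⟨x.1, hx.1⟩, ⟨x.2, hx.2⟩, fun h => hx0 congr(WithLp.toLp 2 $h),
      congr(($hEx).ofLp.1), congr(($hEx).ofLp.2)⟩
  · rintro ⟨u, v, huv, hv, hu⟩
    refine ⟨⟨WithLp.toLp 2 ((u : H₁), (v : H₂)), u.2, v.2⟩, fun h => huv congr(($h).ofLp), ?_⟩
    exact congr(WithLp.toLp 2 ($hv, $hu))

theorem blockOp_hasEigenvalue_iff_sq_general
    (T : H₁ →ₗ.[ℂ] H₂)
    (lam : ℂ) (hlam : lam ≠ 0) :
    ((blockOp T).HasEigenvalue lam ↔ hasEigenvalueTTstar T (lam ^ 2)) ∧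
      (hasEigenvalueTTstar T (lam ^ 2) ↔ hasEigenvalueTstarT T (lam ^ 2)) :=
  -- `hasEigenvalueTTstar T` is `T.HasCompEigenvalue T.adjoint` and `hasEigenvalueTstarT T` is
  -- `T.adjoint.HasCompEigenvalue T`, definitionally.
  ⟨(blockOp_hasEigenvalue_iff T lam).trans (hasCompEigenvalue_sq_iff hlam).symm,
    hasCompEigenvalue_comm (pow_ne_zero 2 hlam)⟩

/-- For a densely defined closed operator `T` and `λ ≠ 0`: `λ` is an eigenvalue
of the block operator `E = [[0,T*],[T,0]]` iff `λ²` is an eigenvalue of `T T*`, iff `λ²` is an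
eigenvalue of `T* T`. -/
theorem blockOp_hasEigenvalue_iff_sq
    [TopologicalSpace.SeparableSpace H₁] [TopologicalSpace.SeparableSpace H₂]
    (T : H₁ →ₗ.[ℂ] H₂) (hdense : Dense (T.domain : Set H₁)) (hclosed : T.IsClosed)
    (lam : ℂ) (hlam : lam ≠ 0) :
    ((blockOp T).HasEigenvalue lam ↔ hasEigenvalueTTstar T (lam ^ 2)) ∧
      (hasEigenvalueTTstar T (lam ^ 2) ↔ hasEigenvalueTstarT T (lam ^ 2)) :=
  blockOp_hasEigenvalue_iff_sq_general T lam hlam
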